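/- Let k be an algebraically closed field of characteristic zero and q ∈ k not a root of unity. If f in the algebraic closure of k(t) satisfies Q_t^n(f) = f for some positive integer n (Q_t an extension of t ↦ qt), then f ∈ k. -/

import Mathlib

/-!
On the image of `k(t)`, `σ ^ n` acts as the substitution `t ↦ q ^ n t`, so it maps the minimal
polynomial of `f` over `k(t)` to a monic polynomial of the same degree vanishing at `f`, hence
fixes its coefficients. A rational function `p / s` in lowest terms (`s` monic) that is invariant
under `t ↦ c t`, with `c` not a root of unity, is constant: `s` divides its own rescaling, which
forces `s = t ^ d`, then `p = a t ^ d`, and coprimality gives `d = 0`. So `f` is integral over the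
algebraically closed field `k`, hence lies in `k`.
-/

open Polynomial
open scoped nonZeroDivisors

theorem pow_injective_of_forall_pow_ne_one {k : Type*} [GroupWithZero k] {c : k} (hc0 : c ≠ 0)
    (hc : ∀ m : ℕ, 0 < m → c ^ m ≠ 1) : Function.Injective (c ^ · : ℕ → k) := by
  have hfin : ¬IsOfFinOrder (Units.mk0 c hc0) := by
    rw [isOfFinOrder_iff_pow_eq_one]
    rintro ⟨m, hm, hcm⟩
    exact hc m hm (by simpa [Units.ext_iff] using hcm)
  intro i j hij
  exact injective_pow_iff_not_isOfFinOrder.2 hfin (Units.ext (by simpa using hij))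

namespace RingAut

variable {R : Type*}

theorem pow_apply_eq_self [Semiring R] {σ : RingAut R} {x : R} (h : σ x = x) (m : ℕ) :
    (σ ^ m) x = x := by
  induction m with
  | zero => rfl
  | succ m ih => rw [pow_succ, mul_apply, h, ih]

theorem pow_apply_eq_pow_mul [CommSemiring R] {σ : RingAut R} {x y : R} (hy : σ y = y)
    (hx : σ x = y * x) (m : ℕ) : (σ ^ m) x = y ^ m * x := by
  induction m with
  | zero => rw [pow_zero, pow_zero, one_mul]; rfl
  | succ m ih => rw [pow_succ, mul_apply, hx, map_mul, ih, pow_apply_eq_self hy, pow_succ']; ring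

end RingAut

namespace Polynomial

variable {k : Type*} [Field k] {c : k}

theorem eq_C_mul_X_pow_of_comp_C_mul_X_eq (hc : Function.Injective (c ^ · : ℕ → k)) {p : k[X]}
    {d : ℕ} (h : p.comp (C c * X) = C (c ^ d) * p) : p = C (p.coeff d) * X ^ d := by
  ext i
  have hi := congrArg (coeff · i) h
  simp only [comp_C_mul_X_coeff, coeff_C_mul] at hi
  rw [coeff_C_mul_X_pow]
  split_ifs with hid
  · rw [hid]
  · by_contra hpi
    exact hid (hc (mul_left_cancel₀ hpi (hi.trans (mul_comm _ _))))

theorem Monic.eq_X_pow_of_dvd_comp_C_mul_X {s : k[X]} (hs : s.Monic) (hc0 : c ≠ 0)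
    (hc : Function.Injective (c ^ · : ℕ → k)) (h : s ∣ s.comp (C c * X)) :
    s = X ^ s.natDegree := by
  have hdeg1 : (C c * X).natDegree = 1 := natDegree_C_mul_X c hc0
  have hcomp := eq_mul_leadingCoeff_of_monic_of_dvd_of_natDegree_le hs h
    (by rw [natDegree_comp, hdeg1, mul_one])
  rw [leadingCoeff_comp (by rw [hdeg1]; exact one_ne_zero), hs.leadingCoeff, leadingCoeff_C_mul_X,
    one_mul] at hcomp
  simpa [hs.coeff_natDegree] using
    eq_C_mul_X_pow_of_comp_C_mul_X_eq hc (hcomp.trans (mul_comm _ _))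

theorem eq_one_and_eq_C_of_comp_C_mul_X_mul_eq (hc0 : c ≠ 0)
    (hc : ∀ m : ℕ, 0 < m → c ^ m ≠ 1) {p s : k[X]} (hps : IsCoprime p s) (hs : s.Monic)
    (h : p.comp (C c * X) * s = p * s.comp (C c * X)) : s = 1 ∧ p = C (p.coeff 0) := by
  have hinj := pow_injective_of_forall_pow_ne_one hc0 hc
  have hsX : s = X ^ s.natDegree :=
    hs.eq_X_pow_of_dvd_comp_C_mul_X hc0 hinj (hps.symm.dvd_of_dvd_mul_left (Dvd.intro_left _ h))
  set d := s.natDegree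
  have hpX : p = C (p.coeff d) * X ^ d := by
    refine eq_C_mul_X_pow_of_comp_C_mul_X_eq hinj (mul_right_cancel₀ hs.ne_zero ?_)
    rw [h, hsX, pow_comp, X_comp, mul_pow, ← C_pow]
    ring
  have hd : d = 0 := by
    by_contra hd
    have hX : (X : k[X]) ∣ X ^ d := dvd_pow_self _ hd
    exact not_isUnit_X (hps.isUnit_of_dvd' (hpX ▸ hX.mul_left _) (hsX ▸ hX))
  rw [hd, pow_zero] at hsX hpX
  exact ⟨hsX, by rwa [mul_one] at hpX⟩

theorem comp_C_mul_X_injective (hc0 : c ≠ 0) :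
    Function.Injective (compRingHom (C c * X) : k[X] →+* k[X]) :=
  (injective_iff_map_eq_zero _).2 fun _ =>
    (comp_C_mul_X_eq_zero_iff (mem_nonZeroDivisors_of_ne_zero hc0)).1

end Polynomial

namespace RatFunc

variable {k : Type*} [Field k]

theorem ringHom_ext {L : Type*} [Semiring L] {f g : RatFunc k →+* L}
    (hC : ∀ a, f (C a) = g (C a)) (hX : f X = g X) : f = g := by
  refine IsLocalization.ringHom_ext k[X]⁰ (Polynomial.ringHom_ext (fun a => ?_) ?_)
  · simpa only [RingHom.comp_apply, algebraMap_C] using hC a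
  · simpa only [RingHom.comp_apply, algebraMap_X] using hX

noncomputable def scale (c : k) (hc0 : c ≠ 0) : RatFunc k →+* RatFunc k :=
  liftRingHom ((algebraMap k[X] (RatFunc k)).comp (compRingHom (Polynomial.C c * Polynomial.X)))
    (nonZeroDivisors_le_comap_nonZeroDivisors_of_injective _
      ((algebraMap_injective k).comp (comp_C_mul_X_injective hc0)))

variable {c : k} {hc0 : c ≠ 0}

theorem scale_algebraMap (p : k[X]) :
    scale c hc0 (algebraMap k[X] (RatFunc k) p) =
      algebraMap k[X] (RatFunc k) (p.comp (Polynomial.C c * Polynomial.X)) :=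
  liftRingHom_algebraMap _ _ p

theorem scale_C (a : k) : scale c hc0 (C a) = C a := by
  rw [← algebraMap_C, scale_algebraMap, C_comp]

theorem scale_X : scale c hc0 X = C c * X := by
  rw [← algebraMap_X, scale_algebraMap, X_comp, map_mul, algebraMap_C, algebraMap_X]

theorem ringHom_comp_eq_comp_scale {L : Type*} [Semiring L] {ι : RatFunc k →+* L}
    {τ : L →+* L} (hC : ∀ a, τ (ι (C a)) = ι (C a)) (hX : τ (ι X) = ι (C c) * ι X) :
    τ.comp ι = ι.comp (scale c hc0) :=
  ringHom_ext (fun a => by simp only [RingHom.comp_apply, hC, scale_C])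
    (by simp only [RingHom.comp_apply, hX, scale_X, map_mul])

theorem mem_range_C_of_scale_eq_self (hc : ∀ m : ℕ, 0 < m → c ^ m ≠ 1) {r : RatFunc k}
    (hr : scale c hc0 r = r) : r ∈ Set.range C := by
  have hcross : r.num.comp (Polynomial.C c * Polynomial.X) * r.denom =
      r.num * r.denom.comp (Polynomial.C c * Polynomial.X) := by
    have hs : r.denom.comp (Polynomial.C c * Polynomial.X) ≠ 0 := fun h =>
      r.denom_ne_zero ((comp_C_mul_X_eq_zero_iff (mem_nonZeroDivisors_of_ne_zero hc0)).1 h)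
    rw [← num_div_denom r, map_div₀, scale_algebraMap, scale_algebraMap,
      div_eq_div_iff (algebraMap_ne_zero hs) (algebraMap_ne_zero r.denom_ne_zero)] at hr
    exact algebraMap_injective k (by simpa only [map_mul] using hr)
  obtain ⟨hs, hp⟩ := eq_one_and_eq_C_of_comp_C_mul_X_mul_eq hc0 hc r.isCoprime_num_denom
    r.monic_denom hcross
  refine ⟨r.num.coeff 0, ?_⟩
  rw [← num_div_denom r, hs, hp]
  simp

end RatFunc

theorem minpoly.map_eq_self_of_comp_eq {K L : Type*} [Field K] [CommRing L] [Algebra K L]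
    {g : K →+* K} {τ : L →+* L} (hτ : τ.comp (algebraMap K L) = (algebraMap K L).comp g)
    {x : L} (hx : IsIntegral K x) (hτx : τ x = x) : (minpoly K x).map g = minpoly K x := by
  have hroot : Polynomial.aeval x ((minpoly K x).map g) = 0 := by
    have h := congrArg τ (minpoly.aeval K x)
    rwa [aeval_def, hom_eval₂, hτx, map_zero, hτ, ← eval₂_map, ← aeval_def] at h
  exact eq_of_monic_of_dvd_of_natDegree_le (minpoly.monic hx) ((minpoly.monic hx).map g)
    (minpoly.dvd K x hroot) natDegree_map_le

theorem IsIntegral.of_minpoly_coeff_mem_range {k K L : Type*} [CommRing k] [CommRing K]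
    [CommRing L] [Algebra k K] [Algebra K L] [Algebra k L] [IsScalarTower k K L] {x : L}
    (hx : IsIntegral K x) (h : ∀ i, (minpoly K x).coeff i ∈ Set.range (algebraMap k K)) :
    IsIntegral k x := by
  obtain ⟨P, hPmap, -, hPmonic⟩ :=
    lifts_and_natDegree_eq_and_monic ((lifts_iff_coeff_lifts _).2 h) (minpoly.monic hx)
  exact ⟨P, hPmonic, by rw [← aeval_def, ← aeval_map_algebraMap K, hPmap, minpoly.aeval]⟩

theorem stmt10_general {k : Type*} [Field k] [IsAlgClosed k]
    (q : k) (hq0 : q ≠ 0) (hq : ∀ n : ℕ, 0 < n → q ^ n ≠ 1)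
    (σ : RingAut (AlgebraicClosure (RatFunc k)))
    (hσk : ∀ a : k, σ (algebraMap (RatFunc k) (AlgebraicClosure (RatFunc k)) (RatFunc.C a))
      = algebraMap (RatFunc k) (AlgebraicClosure (RatFunc k)) (RatFunc.C a))
    (hσt : σ (algebraMap (RatFunc k) (AlgebraicClosure (RatFunc k)) RatFunc.X)
      = algebraMap (RatFunc k) (AlgebraicClosure (RatFunc k)) (RatFunc.C q) *
        algebraMap (RatFunc k) (AlgebraicClosure (RatFunc k)) RatFunc.X)
    (f : AlgebraicClosure (RatFunc k)) (n : ℕ) (hn : 0 < n)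
    (hf : (σ ^ n) f = f) :
    ∃ c : k, f = algebraMap (RatFunc k) (AlgebraicClosure (RatFunc k)) (RatFunc.C c) := by
  have hqn0 : q ^ n ≠ 0 := pow_ne_zero n hq0
  have hqn : ∀ m : ℕ, 0 < m → (q ^ n) ^ m ≠ 1 := fun m hm => by
    rw [← pow_mul]
    exact hq _ (Nat.mul_pos hn hm)
  have hτ := RatFunc.ringHom_comp_eq_comp_scale (hc0 := hqn0)
    (ι := algebraMap (RatFunc k) (AlgebraicClosure (RatFunc k))) (τ := (σ ^ n : RingAut _))
    (fun a => RingAut.pow_apply_eq_self (hσk a) n)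
    (by rw [map_pow, map_pow]; exact RingAut.pow_apply_eq_pow_mul (hσk q) hσt n)
  have hfix := minpoly.map_eq_self_of_comp_eq hτ (Algebra.IsIntegral.isIntegral f) hf
  have hcoeff (i : ℕ) :
      (minpoly (RatFunc k) f).coeff i ∈ Set.range (algebraMap k (RatFunc k)) := by
    rw [RatFunc.algebraMap_eq_C]
    refine RatFunc.mem_range_C_of_scale_eq_self (hc0 := hqn0) hqn ?_
    rw [← coeff_map, hfix]
  have hfk : IsIntegral k f :=
    (Algebra.IsIntegral.isIntegral f).of_minpoly_coeff_mem_range hcoeff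
  obtain ⟨c, hc⟩ := minpoly.mem_range_of_degree_eq_one k f
    (IsAlgClosed.degree_eq_one_of_irreducible k (minpoly.irreducible hfk))
  exact ⟨c, by rw [← hc, IsScalarTower.algebraMap_apply k (RatFunc k), RatFunc.algebraMap_eq_C]⟩

/-- Lemma 3.4(ii): let `k` be algebraically closed of characteristic zero, `q ∈ k` not a
root of unity, and `σ` an extension to the algebraic closure of `k(t)` of the `q`-shift
automorphism `t ↦ qt` of `k(t)`.  If `σ^n f = f` for some positive integer `n`, then
`f ∈ k`. -/
theorem stmt10 {k : Type*} [Field k] [CharZero k] [IsAlgClosed k]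
    (q : k) (hq0 : q ≠ 0) (hq : ∀ n : ℕ, 0 < n → q ^ n ≠ 1)
    (σ : RingAut (AlgebraicClosure (RatFunc k)))
    (hσk : ∀ a : k, σ (algebraMap (RatFunc k) (AlgebraicClosure (RatFunc k)) (RatFunc.C a))
      = algebraMap (RatFunc k) (AlgebraicClosure (RatFunc k)) (RatFunc.C a))
    (hσt : σ (algebraMap (RatFunc k) (AlgebraicClosure (RatFunc k)) RatFunc.X)
      = algebraMap (RatFunc k) (AlgebraicClosure (RatFunc k)) (RatFunc.C q) *
        algebraMap (RatFunc k) (AlgebraicClosure (RatFunc k)) RatFunc.X)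
    (f : AlgebraicClosure (RatFunc k)) (n : ℕ) (hn : 0 < n)
    (hf : (σ ^ n) f = f) :
    ∃ c : k, f = algebraMap (RatFunc k) (AlgebraicClosure (RatFunc k)) (RatFunc.C c) :=
  stmt10_general q hq0 hq σ hσk hσt f n hn hf
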